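/- Let h : ℂ → ℂ be an ℝ-linear bijection written h(z) = ς₀·z + ς₁·conj(z), and let H : U → ℂ be a holomorphic function on an open connected set U ⊆ h⁻¹-image domain such that h ∘ H ∘ h⁻¹ is holomorphic on h(U). If ς₀ ≠ 0 and ς₁ ≠ 0, then the derivative H' is real-valued on U, hence constant, and H is affine: H(z) = a·z + b with a ∈ ℝ. -/

import Mathlib

/-!
Write `K = h ∘ H ∘ h⁻¹`, so that `h ∘ H = K ∘ h`. Differentiating over `ℝ` at `z ∈ U`,
`h (H'(z) v) = K'(h z) · h v` for all `v`; testing `v = 1` and `v = I` separates the `ς₀`- and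
`ς₁`-parts and gives `H'(z) = K'(h z) = conj H'(z)` as soon as `ς₀ ς₁ ≠ 0`. A real-valued
holomorphic function is not an open map, so by the open mapping theorem `H'` is a real constant
on the connected set `U`, and `H` is affine there.
-/

open Complex ComplexConjugate Filter Topology Set

noncomputable def mulAddMulConjCLM (ς₀ ς₁ : ℂ) : ℂ →L[ℝ] ℂ :=
  ς₀ • ContinuousLinearMap.id ℝ ℂ + ς₁ • conjCLE.toContinuousLinearMap

@[simp]
lemma mulAddMulConjCLM_apply (ς₀ ς₁ z : ℂ) :
    mulAddMulConjCLM ς₀ ς₁ z = ς₀ * z + ς₁ * conj z := by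
  simp [mulAddMulConjCLM]

lemma HasDerivAt.map_mul_eq_mul_map_of_comp_eventuallyEq {L : ℂ →L[ℝ] ℂ} {F K : ℂ → ℂ}
    {a b z : ℂ} (hF : HasDerivAt F a z) (hK : HasDerivAt K b (L z))
    (hcomm : L ∘ F =ᶠ[𝓝 z] K ∘ L) (v : ℂ) : L (a * v) = b * L v := by
  have hLF := L.hasFDerivAt.comp z (hF.hasFDerivAt.restrictScalars ℝ)
  have hKL := (hK.hasFDerivAt.restrictScalars ℝ).comp z L.hasFDerivAt
  simpa [mul_comm] using congr($((hLF.congr_of_eventuallyEq hcomm.symm).unique hKL) v)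

lemma im_eq_zero_of_mulAddMulConjCLM_mul_eq {ς₀ ς₁ a b : ℂ} (hς₀ : ς₀ ≠ 0) (hς₁ : ς₁ ≠ 0)
    (h : ∀ v, mulAddMulConjCLM ς₀ ς₁ (a * v) = b * mulAddMulConjCLM ς₀ ς₁ v) : a.im = 0 := by
  have h₁ := h 1
  have h_I := h I
  simp only [mulAddMulConjCLM_apply, map_mul, conj_I, map_one, mul_one] at h₁ h_I
  have : ς₀ * ς₁ * (conj a - a) = 0 := by
    linear_combination (ς₀ - ς₁) / 2 * h₁ + I * (ς₀ + ς₁) / 2 * h_I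
      - (ς₀ + ς₁) / 2 * (ς₀ * a - ς₁ * conj a - b * (ς₀ - ς₁)) * I_sq
  rw [mul_eq_zero, sub_eq_zero] at this
  exact conj_eq_iff_im.mp (this.resolve_left (mul_ne_zero hς₀ hς₁))

lemma AnalyticOnNhd.exists_eqOn_ofReal_of_im_eq_zero {f : ℂ → ℂ} {U : Set ℂ}
    (hf : AnalyticOnNhd ℂ f U) (hU : IsOpen U) (hconn : IsPreconnected U)
    (him : ∀ z ∈ U, (f z).im = 0) : ∃ a : ℝ, ∀ z ∈ U, f z = a := by
  obtain ⟨w, hw⟩ : ∃ w, ∀ z ∈ U, f z = w := by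
    refine (hf.is_constant_or_isOpen hconn).elim id fun hopen ↦ ⟨0, fun z hz ↦ ?_⟩
    -- an open set of real numbers in `ℂ` is empty, so `U` is empty
    have hsub : f '' U ⊆ interior (im ⁻¹' {0}) :=
      interior_maximal (image_subset_iff.mpr him) (hopen U subset_rfl hU)
    rw [interior_preimage_im, interior_singleton, preimage_empty] at hsub
    exact (hsub (mem_image_of_mem f hz)).elim
  exact ⟨w.re, fun z hz ↦ Complex.ext (by simp [hw z hz]) (by simp [← hw z hz, him z hz])⟩

/-- If `h z = ς₀ z + ς₁ conj z` with `ς₀ ≠ 0 ≠ ς₁`, `g` is a two-sided inverse of `h`,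
`H` is holomorphic on an open connected `U` and `h ∘ H ∘ g` is holomorphic on `h '' U`,
then `H'` is real-valued on `U` and `H` is affine `H z = a z + b` with `a` real. -/
theorem stmt7 (ς₀ ς₁ : ℂ) (hς₀ : ς₀ ≠ 0) (hς₁ : ς₁ ≠ 0)
    (h g : ℂ → ℂ)
    (hform : ∀ z, h z = ς₀ * z + ς₁ * (starRingEnd ℂ) z)
    (hg₁ : Function.LeftInverse g h) (hg₂ : Function.RightInverse g h)
    (U : Set ℂ) (hU : IsOpen U) (hconn : IsPreconnected U)
    (H : ℂ → ℂ) (hH : DifferentiableOn ℂ H U)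
    (hcomp : DifferentiableOn ℂ (h ∘ H ∘ g) (h '' U)) :
    (∀ z ∈ U, (deriv H z).im = 0) ∧
      ∃ a b : ℂ, a.im = 0 ∧ ∀ z ∈ U, H z = a * z + b := by
  obtain rfl : h = mulAddMulConjCLM ς₀ ς₁ := funext fun z ↦ by simp [hform]
  have himage : IsOpen (mulAddMulConjCLM ς₀ ς₁ '' U) :=
    (mulAddMulConjCLM ς₀ ς₁).isOpenMap hg₂.surjective U hU
  have hreal (z : ℂ) (hz : z ∈ U) : (deriv H z).im = 0 := by
    refine im_eq_zero_of_mulAddMulConjCLM_mul_eq hς₀ hς₁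
      ((hH.differentiableAt (hU.mem_nhds hz)).hasDerivAt
        |>.map_mul_eq_mul_map_of_comp_eventuallyEq
          (hcomp.differentiableAt (himage.mem_nhds (mem_image_of_mem _ hz))).hasDerivAt
          (.of_eq (funext fun w ↦ by simp only [Function.comp_apply, hg₁ w])))
  obtain ⟨a, ha⟩ := (hH.analyticOnNhd hU).deriv.exists_eqOn_ofReal_of_im_eq_zero hU hconn hreal
  obtain ⟨b, hb⟩ := hU.exists_eq_add_of_deriv_eq hconn hH (differentiableOn_id.const_mul (a : ℂ))
    fun z hz ↦ by simp [ha z hz]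
  exact ⟨hreal, a, b, ofReal_im a, hb⟩
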